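/- arXiv:1511.00476 — 2 statements merged into one kernel-verified Lean document; each statement's English description precedes it below -/
import Mathlib

section
/- Let C be a field, S = C[s,t,1/(3s²−1)]/(s³−s−t²), and let M be the S-module with generators f₁, f₂ and relations t·f₁ − s·f₂ = 0 and (s²−1)·f₁ − t·f₂ = 0. Then M is isomorphic as an S-module to the ideal I = (s,t) ⊆ S via f₁ ↦ s, f₂ ↦ t. -/
set_option maxHeartbeats 1000000
set_option synthInstance.maxHeartbeats 1000000

open MvPolynomial

/-- The ring `S = C[s,t,1/(3s²-1)]/(s³-s-t²)`, presented as
`C[s,t,u]/(s³-s-t², u·(3s²-1)-1)` with `s = X 0`, `t = X 1`, `u = 1/(3s²-1) = X 2`. -/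
noncomputable abbrev SR (C : Type) [Field C] : Type :=
  MvPolynomial (Fin 3) C ⧸
    Ideal.span {(X 0 : MvPolynomial (Fin 3) C) ^ 3 - X 0 - X 1 ^ 2,
      X 2 * (3 * X 0 ^ 2 - 1) - 1}

/-- The image of `s` in `S`. -/
noncomputable def sS (C : Type) [Field C] : SR C := Ideal.Quotient.mk _ (X 0)

/-- The image of `t` in `S`. -/
noncomputable def tS (C : Type) [Field C] : SR C := Ideal.Quotient.mk _ (X 1)

/-- The submodule of relations `⟨(t,-s), (s²-1,-t)⟩ ⊆ S²`. -/
noncomputable def relSub (C : Type) [Field C] : Submodule (SR C) (SR C × SR C) :=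
  Submodule.span (SR C) {(tS C, -sS C), (sS C ^ 2 - 1, -tS C)}

/-- The `S`-module `M` generated by `f₁, f₂` with relations
`t·f₁ - s·f₂ = 0` and `(s²-1)·f₁ - t·f₂ = 0`. -/
noncomputable abbrev Mmod (C : Type) [Field C] : Type := (SR C × SR C) ⧸ relSub C

/-- The generator `f₁` of `M`. -/
noncomputable def f₁ (C : Type) [Field C] : Mmod C := Submodule.Quotient.mk (1, 0)

/-- The generator `f₂` of `M`. -/
noncomputable def f₂ (C : Type) [Field C] : Mmod C := Submodule.Quotient.mk (0, 1)

section Aux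

variable (C : Type) [Field C]

lemma sub_aeval_mem (I : Ideal (MvPolynomial (Fin 3) C)) (g : Fin 3 → MvPolynomial (Fin 3) C)
    (hg : ∀ i, X i - g i ∈ I) (Q : MvPolynomial (Fin 3) C) : Q - aeval g Q ∈ I := by
  induction Q using MvPolynomial.induction_on with
  | C c => simp
  | add p q hp hq =>
      have := I.add_mem hp hq
      simpa [map_add, add_sub_add_comm] using this
  | mul_X p i hp =>
      have h1 : p * X i - aeval g (p * X i)
          = p * (X i - g i) + g i * (p - aeval g p) := by
        simp [map_mul]; ring
      rw [h1]
      exact I.add_mem (I.mul_mem_left _ (hg i)) (I.mul_mem_left _ hp)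

lemma syzygy (A B : MvPolynomial (Fin 3) C)
    (h : A * X 0 + B * X 1 ∈ Ideal.span {(X 0 : MvPolynomial (Fin 3) C) ^ 3 - X 0 - X 1 ^ 2,
      X 2 * (3 * X 0 ^ 2 - 1) - 1}) :
    ∃ E P α β : MvPolynomial (Fin 3) C,
      A = E * X 1 + P * (X 0 ^ 2 - 1) + α * (X 2 * (3 * X 0 ^ 2 - 1) - 1) ∧
      B = -(E * X 0) - P * X 1 + β * (X 2 * (3 * X 0 ^ 2 - 1) - 1) := by
  obtain ⟨P, Q, hPQ⟩ := Ideal.mem_span_pair.mp h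
  -- substitution killing X 0, X 1
  set σ : MvPolynomial (Fin 3) C →ₐ[C] MvPolynomial (Fin 3) C := aeval ![0, 0, X 2] with hσ
  have hσ0 : σ (X 0) = 0 := by rw [hσ, aeval_X]; rfl
  have hσ1 : σ (X 1) = 0 := by rw [hσ, aeval_X]; rfl
  have hσ2 : σ (X 2) = X 2 := by rw [hσ, aeval_X]; rfl
  have hEq := congrArg σ hPQ
  simp only [map_add, map_mul, map_sub, map_pow, map_one, map_ofNat, hσ0, hσ1, hσ2] at hEq
  have hQ0 : σ Q = 0 := by
    have h4 : σ Q * (X 2 + 1) = 0 := by linear_combination -hEq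
    rcases mul_eq_zero.mp h4 with h | h
    · exact h
    · exfalso
      have := congrArg constantCoeff h
      simp at this
  have hQmem : Q ∈ Ideal.span {(X 0 : MvPolynomial (Fin 3) C), X 1} := by
    have := sub_aeval_mem C (Ideal.span {(X 0 : MvPolynomial (Fin 3) C), X 1})
      ![0, 0, X 2] (by
        intro i
        fin_cases i
        · show (X 0 : MvPolynomial (Fin 3) C) - 0 ∈ _
          rw [sub_zero]; exact Ideal.subset_span (Set.mem_insert _ _)
        · show (X 1 : MvPolynomial (Fin 3) C) - 0 ∈ _
          rw [sub_zero]; exact Ideal.subset_span (Set.mem_insert_of_mem _ rfl)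
        · show (X 2 : MvPolynomial (Fin 3) C) - X 2 ∈ _
          rw [sub_self]; exact Ideal.zero_mem _) Q
    rw [show aeval ![0, 0, X 2] Q = σ Q from rfl, hQ0, sub_zero] at this
    exact this
  obtain ⟨α, β, hQab⟩ := Ideal.mem_span_pair.mp hQmem
  set A₁ : MvPolynomial (Fin 3) C :=
    A - P * (X 0 ^ 2 - 1) - α * (X 2 * (3 * X 0 ^ 2 - 1) - 1) with hA₁
  set B₁ : MvPolynomial (Fin 3) C :=
    B + P * X 1 - β * (X 2 * (3 * X 0 ^ 2 - 1) - 1) with hB₁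
  have key : A₁ * X 0 + B₁ * X 1 = 0 := by
    rw [hA₁, hB₁]
    linear_combination -hPQ + (X 2 * (3 * X 0 ^ 2 - 1) - 1) * hQab.symm
  -- now kill X 1 to show X 1 ∣ A₁
  set τ : MvPolynomial (Fin 3) C →ₐ[C] MvPolynomial (Fin 3) C :=
    aeval ![X 0, 0, X 2] with hτ
  have hτA : τ A₁ = 0 := by
    have hEq2 := congrArg τ key
    simp only [map_add, map_mul, map_zero, hτ, aeval_X] at hEq2
    rw [show ((![X 0, 0, X 2] : Fin 3 → MvPolynomial (Fin 3) C) 0) = X 0 from rfl,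
       show ((![X 0, 0, X 2] : Fin 3 → MvPolynomial (Fin 3) C) 1) = 0 from rfl,
       mul_zero, add_zero] at hEq2
    rcases mul_eq_zero.mp hEq2 with h | h
    · rw [← hτ] at h; exact h
    · exact absurd h (X_ne_zero 0)
  have hA₁mem : A₁ ∈ Ideal.span {(X 1 : MvPolynomial (Fin 3) C)} := by
    have := sub_aeval_mem C (Ideal.span {(X 1 : MvPolynomial (Fin 3) C)})
      ![X 0, 0, X 2] (by
        intro i
        fin_cases i
        · show (X 0 : MvPolynomial (Fin 3) C) - X 0 ∈ _
          rw [sub_self]; exact Ideal.zero_mem _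
        · show (X 1 : MvPolynomial (Fin 3) C) - 0 ∈ _
          rw [sub_zero]; exact Ideal.subset_span rfl
        · show (X 2 : MvPolynomial (Fin 3) C) - X 2 ∈ _
          rw [sub_self]; exact Ideal.zero_mem _) A₁
    rw [show aeval ![X 0, 0, X 2] A₁ = τ A₁ from rfl, hτA, sub_zero] at this
    exact this
  obtain ⟨E, hE⟩ := Ideal.mem_span_singleton'.mp hA₁mem
  have hB₁' : B₁ = -(E * X 0) := by
    have h5 : X 1 * (E * X 0 + B₁) = 0 := by linear_combination key + X 0 * hE
    rcases mul_eq_zero.mp h5 with h | h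
    · exact absurd h (X_ne_zero 1)
    · linear_combination h
  refine ⟨E, P, α, β, ?_, ?_⟩
  · linear_combination -hE
  · linear_combination hB₁'

/-- The linear map `S² → S`, `(a,b) ↦ a·s + b·t`. -/
noncomputable def phiMap : (SR C × SR C) →ₗ[SR C] SR C where
  toFun p := p.1 * sS C + p.2 * tS C
  map_add' p q := by simp only [Prod.fst_add, Prod.snd_add]; ring
  map_smul' r p := by simp only [Prod.smul_fst, Prod.smul_snd, smul_eq_mul,
    RingHom.id_apply]; ring

lemma g1_zero : Ideal.Quotient.mk _ ((X 0 : MvPolynomial (Fin 3) C) ^ 3 - X 0 - X 1 ^ 2)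
    = (0 : SR C) := by
  rw [Ideal.Quotient.eq_zero_iff_mem]
  exact Ideal.subset_span (Set.mem_insert _ _)

lemma g2_zero : Ideal.Quotient.mk _ ((X 2 : MvPolynomial (Fin 3) C) * (3 * X 0 ^ 2 - 1) - 1)
    = (0 : SR C) := by
  rw [Ideal.Quotient.eq_zero_iff_mem]
  exact Ideal.subset_span (Set.mem_insert_of_mem _ rfl)

lemma phi_ker : LinearMap.ker (phiMap C) = relSub C := by
  apply le_antisymm
  · intro p hp
    obtain ⟨a, b⟩ := p
    have hab : a * sS C + b * tS C = 0 := hp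
    obtain ⟨A, hA⟩ := Ideal.Quotient.mk_surjective a
    obtain ⟨B, hB⟩ := Ideal.Quotient.mk_surjective b
    have hmem : A * X 0 + B * X 1 ∈
        Ideal.span {(X 0 : MvPolynomial (Fin 3) C) ^ 3 - X 0 - X 1 ^ 2,
          X 2 * (3 * X 0 ^ 2 - 1) - 1} := by
      rw [← Ideal.Quotient.eq_zero_iff_mem, map_add, map_mul, map_mul, hA, hB]
      exact hab
    obtain ⟨E, P, α, β, hAe, hBe⟩ := syzygy C A B hmem
    rw [relSub, Submodule.mem_span_pair]
    refine ⟨Ideal.Quotient.mk _ E, Ideal.Quotient.mk _ P, ?_⟩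
    have hz : (Ideal.Quotient.mk _ (X 2) : SR C)
        * (Ideal.Quotient.mk _ (3 : MvPolynomial (Fin 3) C)
          * Ideal.Quotient.mk _ (X 0) ^ 2 - 1) - 1 = (0 : SR C) := by
      have := g2_zero C
      simpa only [map_sub, map_mul, map_pow, map_one] using this
    have ha : a = Ideal.Quotient.mk _ E * tS C
        + Ideal.Quotient.mk _ P * (sS C ^ 2 - 1) := by
      rw [← hA, hAe]
      simp only [map_add, map_mul, map_sub, map_pow, map_one, map_neg, sS, tS]
      linear_combination (Ideal.Quotient.mk _ α : SR C) * hz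
    have hb : b = -(Ideal.Quotient.mk _ E * sS C) - Ideal.Quotient.mk _ P * tS C := by
      rw [← hB, hBe]
      simp only [map_add, map_mul, map_sub, map_pow, map_one, map_neg, sS, tS]
      linear_combination (Ideal.Quotient.mk _ β : SR C) * hz
    rw [Prod.smul_mk, Prod.smul_mk, Prod.mk_add_mk, smul_eq_mul, smul_eq_mul,
      smul_eq_mul, smul_eq_mul, Prod.mk.injEq]
    constructor
    · rw [ha]
    · rw [hb]; ring
  · rw [relSub, Submodule.span_le]
    rintro p (rfl | rfl)
    · show (phiMap C) (tS C, -sS C) = 0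
      show tS C * sS C + -sS C * tS C = 0
      ring
    · show (phiMap C) (sS C ^ 2 - 1, -tS C) = 0
      show (sS C ^ 2 - 1) * sS C + -tS C * tS C = 0
      have : (sS C ^ 2 - 1) * sS C + -tS C * tS C
          = Ideal.Quotient.mk _ ((X 0 : MvPolynomial (Fin 3) C) ^ 3 - X 0 - X 1 ^ 2) := by
        simp only [sS, tS, map_sub, map_pow]
        ring
      rw [this, g1_zero]

lemma phi_range : LinearMap.range (phiMap C) = Ideal.span {sS C, tS C} := by
  apply le_antisymm
  · rintro z ⟨⟨a, b⟩, rfl⟩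
    exact Ideal.mem_span_pair.mpr ⟨a, b, rfl⟩
  · intro z hz
    obtain ⟨a, b, hab⟩ := Ideal.mem_span_pair.mp hz
    exact ⟨(a, b), hab⟩

end Aux

/-- `M` is isomorphic as an `S`-module to the ideal
`I = (s,t) ⊆ S` via `f₁ ↦ s`, `f₂ ↦ t`. -/
theorem stmt16 (C : Type) [Field C] :
    ∃ e : Mmod C ≃ₗ[SR C] (Ideal.span {sS C, tS C} : Ideal (SR C)),
      e (f₁ C) = ⟨sS C, Ideal.subset_span (Set.mem_insert _ _)⟩ ∧
      e (f₂ C) = ⟨tS C, Ideal.subset_span (Set.mem_insert_of_mem _ rfl)⟩ := by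
  refine ⟨(Submodule.quotEquivOfEq (relSub C) (LinearMap.ker (phiMap C))
      (phi_ker C).symm).trans (((phiMap C).quotKerEquivRange).trans
      (LinearEquiv.ofEq _ _ (phi_range C))), ?_, ?_⟩
  · apply Subtype.ext
    simp only [f₁, LinearEquiv.trans_apply, Submodule.quotEquivOfEq_mk]
    rw [LinearEquiv.coe_ofEq_apply, LinearMap.quotKerEquivRange_apply_mk]
    show (1 : SR C) * sS C + 0 * tS C = sS C
    ring
  · apply Subtype.ext
    simp only [f₂, LinearEquiv.trans_apply, Submodule.quotEquivOfEq_mk]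
    rw [LinearEquiv.coe_ofEq_apply, LinearMap.quotKerEquivRange_apply_mk]
    show (0 : SR C) * sS C + 1 * tS C = tS C
    ring
end

section
/- Let C be a field of characteristic 0, S = C[s,t,1/(3s²−1)]/(s³−s−t²) with derivation ∂ extending d/dt (so ∂(s) = 2t/(3s²−1)), and M the S-module generated by f₁, f₂ with relations tf₁ − sf₂ = 0 and (s²−1)f₁ − tf₂ = 0. For any b ∈ S, there is a well-defined additive map ∂_M : M → M with ∂_M(rm) = ∂(r)m + r∂_M(m) for r ∈ S, m ∈ M, determined by ∂_M(f₁) = b f₁ + ((3s²+1)/(3s²−1)) f₂ and ∂_M(f₂) = s f₁ + b f₂. -/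
set_option maxHeartbeats 1000000
set_option synthInstance.maxHeartbeats 1000000

open MvPolynomial

/-- The image of `u = 1/(3s²-1)` in `S`. -/
noncomputable def uS (C : Type) [Field C] : SR C := Ideal.Quotient.mk _ (X 2)

set_option maxHeartbeats 4000000 in
/-- Let `char C = 0`, `S = C[s,t,1/(3s²-1)]/(s³-s-t²)` with the
derivation `∂` extending `d/dt` on `C[t]` (so `∂(s) = 2t/(3s²-1)`), and `M` the
module generated by `f₁, f₂` with relations `t f₁ - s f₂ = 0`,
`(s²-1) f₁ - t f₂ = 0`.  For any `b ∈ S` there is a well-defined additive map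
`∂_M : M → M` with `∂_M(r m) = ∂(r) m + r ∂_M(m)`, determined by
`∂_M(f₁) = b f₁ + ((3s²+1)/(3s²-1)) f₂` and `∂_M(f₂) = s f₁ + b f₂`
(here `cc = (3s²+1)/(3s²-1)` is the element with `cc·(3s²-1) = 3s²+1`). -/
theorem stmt17 (C : Type) [Field C] [CharZero C] (d : SR C → SR C)
    (hadd : ∀ a b : SR C, d (a + b) = d a + d b)
    (hleib : ∀ a b : SR C, d (a * b) = d a * b + a * d b)
    (hext : ∀ f : Polynomial C,
      d (Polynomial.aeval (tS C) f) = Polynomial.aeval (tS C) (Polynomial.derivative f))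
    (hs : d (sS C) * (3 * sS C ^ 2 - 1) = 2 * tS C)
    (b cc : SR C) (hcc : cc * (3 * sS C ^ 2 - 1) = 3 * sS C ^ 2 + 1) :
    ∃ D : Mmod C → Mmod C,
      (∀ x y : Mmod C, D (x + y) = D x + D y) ∧
      (∀ (r : SR C) (m : Mmod C), D (r • m) = d r • m + r • D m) ∧
      D (f₁ C) = b • f₁ C + cc • f₂ C ∧
      D (f₂ C) = sS C • f₁ C + b • f₂ C := by
  classical
  have d0 : d 0 = 0 := by
    have h := hadd 0 0
    rw [add_zero] at h
    linear_combination -h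
  have dsub : ∀ x y : SR C, d (x - y) = d x - d y := by
    intro x y
    have h1 : d ((x - y) + y) = d (x - y) + d y := hadd _ _
    rw [sub_add_cancel] at h1
    linear_combination -h1
  have d1 : d 1 = 0 := by
    have := hleib 1 1
    simp only [mul_one] at this
    linear_combination -this
  have dt : d (tS C) = 1 := by
    have h := hext Polynomial.X
    simpa using h
  -- key ring relations in SR C
  have hurel : uS C * (3 * sS C ^ 2 - 1) = 1 := by
    have h0 : (Ideal.Quotient.mk _ (X 2 * (3 * X 0 ^ 2 - 1) - 1 : MvPolynomial (Fin 3) C)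
        : SR C) = 0 :=
      Ideal.Quotient.eq_zero_iff_mem.mpr (Ideal.subset_span (by simp))
    have h1 : uS C * (3 * sS C ^ 2 - 1) - 1 = 0 := by
      rw [uS, sS]
      rw [← h0]
      push_cast [map_sub, map_mul, map_pow, map_one, map_ofNat]
      ring_nf
    linear_combination h1
  have hcurve : sS C ^ 3 - sS C - tS C ^ 2 = 0 := by
    have h0 : (Ideal.Quotient.mk _ ((X 0 : MvPolynomial (Fin 3) C) ^ 3 - X 0 - X 1 ^ 2)
        : SR C) = 0 :=
      Ideal.Quotient.eq_zero_iff_mem.mpr (Ideal.subset_span (by simp))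
    rw [sS, tS, ← h0]
    push_cast [map_sub, map_pow]
    ring_nf
  have hds : d (sS C) = 2 * tS C * uS C := by
    calc d (sS C) = d (sS C) * (uS C * (3 * sS C ^ 2 - 1)) := by rw [hurel, mul_one]
    _ = uS C * (d (sS C) * (3 * sS C ^ 2 - 1)) := by ring
    _ = uS C * (2 * tS C) := by rw [hs]
    _ = 2 * tS C * uS C := by ring
  have hcc' : cc = uS C * (3 * sS C ^ 2 + 1) := by
    calc cc = cc * (uS C * (3 * sS C ^ 2 - 1)) := by rw [hurel, mul_one]
    _ = uS C * (cc * (3 * sS C ^ 2 - 1)) := by ring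
    _ = uS C * (3 * sS C ^ 2 + 1) := by rw [hcc]
  -- the lifted map on S²
  set F : SR C × SR C → SR C × SR C := fun p =>
    (d p.1 + b * p.1 + sS C * p.2, d p.2 + cc * p.1 + b * p.2) with hF
  have Fadd : ∀ p q, F (p + q) = F p + F q := by
    intro p q
    rw [Prod.ext_iff]
    simp only [hF, Prod.fst_add, Prod.snd_add, hadd]
    constructor <;> ring
  have Fsmul : ∀ (r : SR C) (p), F (r • p) = d r • p + r • F p := by
    intro r p
    rw [Prod.ext_iff]
    simp only [hF, Prod.fst_add, Prod.snd_add, Prod.smul_fst, Prod.smul_snd, smul_eq_mul,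
      hleib]
    constructor <;> ring
  have Fsub : ∀ p q, F (p - q) = F p - F q := by
    intro p q
    rw [Prod.ext_iff]
    simp only [hF, Prod.fst_sub, Prod.snd_sub, dsub]
    constructor <;> ring
  -- F maps the relation submodule into itself
  have Fg1 : F (tS C, -sS C) = b • (tS C, -sS C) + (-1 : SR C) • (sS C ^ 2 - 1, -tS C) := by
    rw [Prod.ext_iff]
    simp only [hF, Prod.fst_add, Prod.snd_add, Prod.smul_mk, smul_eq_mul]
    have hdnegs : d (-sS C) = -d (sS C) := by
      have := dsub 0 (sS C); simpa [d0] using this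
    constructor
    · rw [dt]; ring
    · rw [hdnegs, hds, hcc']
      linear_combination tS C * hurel
  have Fg2 : F (sS C ^ 2 - 1, -tS C) =
      (uS C * (2 * sS C - 3 * tS C ^ 2)) • (tS C, -sS C) + b • (sS C ^ 2 - 1, -tS C) := by
    rw [Prod.ext_iff]
    simp only [hF, Prod.fst_add, Prod.snd_add, Prod.smul_mk, smul_eq_mul]
    have hd1 : d (sS C ^ 2 - 1) = 2 * sS C * d (sS C) := by
      have h2 : sS C ^ 2 - 1 = sS C * sS C - 1 := by ring
      rw [h2, dsub, d1, hleib]; ring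
    have hdnegt : d (-tS C) = -d (tS C) := by
      have := dsub 0 (tS C); simpa [d0] using this
    constructor
    · rw [hd1, hds]
      linear_combination (-3 * tS C * uS C) * hcurve + (sS C * tS C) * hurel
    · rw [hdnegt, dt, hcc']
      linear_combination (3 * sS C * uS C) * hcurve + hurel
  have Fmem : ∀ x ∈ relSub C, F x ∈ relSub C := by
    intro x hx
    induction hx using Submodule.span_induction with
    | mem y hy =>
      rcases hy with hy | hy
      · rw [hy, Fg1]
        exact add_mem (Submodule.smul_mem _ _ (Submodule.subset_span (Or.inl rfl)))
          (Submodule.smul_mem _ _ (Submodule.subset_span (Or.inr rfl)))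
      · rw [hy, Fg2]
        exact add_mem (Submodule.smul_mem _ _ (Submodule.subset_span (Or.inl rfl)))
          (Submodule.smul_mem _ _ (Submodule.subset_span (Or.inr rfl)))
    | zero =>
      have : F 0 = 0 := by simp [hF, d0]
      rw [this]; exact zero_mem _
    | add y z hy hz hy' hz' => rw [Fadd]; exact add_mem hy' hz'
    | smul r y hy hy' =>
      rw [Fsmul]
      exact add_mem (Submodule.smul_mem _ _ hy) (Submodule.smul_mem _ _ hy')
  -- descend to the quotient
  have hwd : ∀ p q : SR C × SR C, Submodule.quotientRel (relSub C) p q →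
      (Submodule.Quotient.mk (F p) : Mmod C) = Submodule.Quotient.mk (F q) := by
    intro p q hpq
    have hmem : p - q ∈ relSub C := (Submodule.quotientRel_def _).mp hpq
    have : F p - F q ∈ relSub C := by rw [← Fsub]; exact Fmem _ hmem
    exact (Submodule.Quotient.eq _).mpr this
  set D : Mmod C → Mmod C :=
    Quotient.lift (fun p => (Submodule.Quotient.mk (F p) : Mmod C)) hwd with hDdef
  have hD : ∀ p : SR C × SR C, D (Submodule.Quotient.mk p) = Submodule.Quotient.mk (F p) :=
    fun _ => rfl
  refine ⟨D, ?_, ?_, ?_, ?_⟩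
  · intro x y
    obtain ⟨p, rfl⟩ := Submodule.Quotient.mk_surjective _ x
    obtain ⟨q, rfl⟩ := Submodule.Quotient.mk_surjective _ y
    rw [← Submodule.Quotient.mk_add, hD, hD, hD, Fadd, Submodule.Quotient.mk_add]
  · intro r m
    obtain ⟨p, rfl⟩ := Submodule.Quotient.mk_surjective _ m
    rw [← Submodule.Quotient.mk_smul, hD, hD, Fsmul, Submodule.Quotient.mk_add,
      Submodule.Quotient.mk_smul, Submodule.Quotient.mk_smul]
  · have h10 : F (1, 0) = (b, cc) := by simp [hF, d1, d0]
    rw [f₁, f₂, hD, h10, ← Submodule.Quotient.mk_smul, ← Submodule.Quotient.mk_smul,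
      ← Submodule.Quotient.mk_add]
    congr 1
    simp
  · have h01 : F (0, 1) = (sS C, b) := by simp [hF, d1, d0]
    rw [f₁, f₂, hD, h01, ← Submodule.Quotient.mk_smul, ← Submodule.Quotient.mk_smul,
      ← Submodule.Quotient.mk_add]
    congr 1
    simp
end
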